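/- arXiv:1312.7180 — 6 statements merged into one kernel-verified Lean document; each statement's English description precedes it below -/
import Mathlib

section
/- Let W be a finite-dimensional rational vector space with a positive definite inner product, S a finite subset of W, and C the convex hull of S. Then a point p lies in C if and only if for every point p' distinct from p there exists s in S with d(s,p) < d(s,p'). -/
/-!
If `p ∈ conv S` and every `s ∈ S` is at least as close to `p'` as to `p`, then the closed
half-space `{x | dist x p' ≤ dist x p}` is convex and contains `S`, hence contains `p`, which
forces `p' = p`. Conversely, if `p ∉ conv S`, the nearest point `q` of the compact convex set
`conv S` to `p` satisfies `⟪p - q, s - q⟫ ≤ 0` on `conv S`, so every `s ∈ S` is at least as close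
to `q` as to `p`.
-/

open RealInnerProductSpace

section InnerProductSpace

variable {E : Type*} [NormedAddCommGroup E] [InnerProductSpace ℝ E]

theorem convex_setOf_dist_le_dist (a b : E) : Convex ℝ {x : E | dist x a ≤ dist x b} := by
  have halfSpace : {x : E | dist x a ≤ dist x b} = {x | ⟪b - a, x⟫ ≤ (‖b‖ ^ 2 - ‖a‖ ^ 2) / 2} := by
    ext x
    simp only [Set.mem_ofPred_eq, dist_eq_norm]
    rw [← sq_le_sq₀ (norm_nonneg _) (norm_nonneg _), norm_sub_sq_real, norm_sub_sq_real,
      inner_sub_left, real_inner_comm x a, real_inner_comm x b]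
    constructor <;> intro h <;> linarith
  rw [halfSpace]
  exact convex_halfSpace_le (innerₛₗ ℝ (b - a)).isLinear _

theorem eq_of_mem_convexHull_of_forall_dist_le {S : Set E} {p p' : E} (hp : p ∈ convexHull ℝ S)
    (h : ∀ s ∈ S, dist s p' ≤ dist s p) : p' = p := by
  have hpp' : dist p p' ≤ dist p p :=
    convexHull_min h (convex_setOf_dist_le_dist p' p) hp
  rw [dist_self] at hpp'
  exact (dist_le_zero.mp hpp').symm

theorem dist_le_dist_of_norm_eq_iInf {K : Set E} (hK : Convex ℝ K) {p q : E} (hq : q ∈ K)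
    (hmin : ‖p - q‖ = ⨅ w : K, ‖p - w‖) {s : E} (hs : s ∈ K) : dist s q ≤ dist s p := by
  have obtuse : ⟪p - q, s - q⟫ ≤ 0 := (norm_eq_iInf_iff_real_inner_le_zero hK hq).mp hmin s hs
  have expand : ‖s - p‖ ^ 2 = ‖s - q‖ ^ 2 - 2 * ⟪s - q, p - q⟫ + ‖p - q‖ ^ 2 := by
    rw [← norm_sub_sq_real, sub_sub_sub_cancel_right]
  rw [dist_eq_norm, dist_eq_norm, ← sq_le_sq₀ (norm_nonneg _) (norm_nonneg _), expand,
    real_inner_comm]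
  nlinarith [sq_nonneg ‖p - q‖]

theorem exists_ne_forall_dist_le_of_notMem {K : Set E} (hne : K.Nonempty) (hK : Convex ℝ K)
    (hc : IsComplete K) {p : E} (hp : p ∉ K) : ∃ q ≠ p, ∀ s ∈ K, dist s q ≤ dist s p := by
  obtain ⟨q, hq, hmin⟩ := exists_norm_eq_iInf_of_complete_convex hne hc hK p
  exact ⟨q, fun hqp => hp (hqp ▸ hq), fun s hs => dist_le_dist_of_norm_eq_iInf hK hq hmin hs⟩

theorem mem_convexHull_iff_forall_ne_exists_dist_lt {S : Set E} (hfin : S.Finite)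
    (hne : S.Nonempty) (p : E) :
    p ∈ convexHull ℝ S ↔ ∀ p' ≠ p, ∃ s ∈ S, dist s p < dist s p' := by
  constructor
  · intro hp p' hp'
    by_contra! hfar
    exact hp' (eq_of_mem_convexHull_of_forall_dist_le hp hfar)
  · intro hnear
    by_contra hp
    obtain ⟨q, hqp, hq⟩ := exists_ne_forall_dist_le_of_notMem (hne.convexHull)
      (convex_convexHull ℝ S) (hfin.isCompact_convexHull ℝ).isComplete hp
    obtain ⟨s, hs, hlt⟩ := hnear q hqp
    exact (hq s (subset_convexHull ℝ S hs)).not_gt hlt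

end InnerProductSpace

/-- Lemma `witnesses`: a point lies in the convex hull of a finite set `S` iff for
every other point `p'` there is `s ∈ S` strictly closer to `p` than to `p'`. -/
theorem stmt_0 {n : ℕ} (S : Finset (EuclideanSpace ℝ (Fin n)))
    (hS : S.Nonempty) (p : EuclideanSpace ℝ (Fin n)) :
    p ∈ convexHull ℝ (S : Set (EuclideanSpace ℝ (Fin n))) ↔
      ∀ p' : EuclideanSpace ℝ (Fin n), p' ≠ p → ∃ s ∈ S, dist s p < dist s p' :=
  mem_convexHull_iff_forall_ne_exists_dist_lt S.finite_toSet hS p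
end

section
/- Let M be a ℂ[x,∂]-module (first Weyl algebra) on which the Euler operator E = x∂ acts semisimply with eigenspace decomposition M = ⊕ M_ℓ, and suppose every element of M is annihilated by a power of x. Then M_ℓ = 0 for all ℓ ≥ 0. More precisely, if m ∈ M_ℓ, m ≠ 0, and N is minimal with x^N m = 0, then N = −ℓ. -/
/-- For a Weyl-algebra module on which every element is annihilated by a power of `x`,
all nonnegative eigenvalues of the Euler operator `E = x∂` have trivial eigenspace;
more precisely if `E m = ℓ m`, `m ≠ 0` and `N` is minimal with `x^N m = 0` then `N = -ℓ`. -/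
theorem stmt_6 {M : Type*} [AddCommGroup M] [Module ℂ M] (X D : Module.End ℂ M)
    (hcomm : D * X - X * D = 1)
    (hX : ∀ m : M, ∃ N : ℕ, (X ^ N) m = 0) :
    (∀ (r : ℝ) (m : M), 0 ≤ r → (X * D) m = (r : ℂ) • m → m = 0) ∧
      (∀ (ℓ : ℂ) (m : M) (N : ℕ), m ≠ 0 → (X * D) m = ℓ • m →
        (X ^ N) m = 0 → (∀ k < N, (X ^ k) m ≠ 0) → (N : ℂ) = -ℓ) := by
  classical
  have hDX : D * X = 1 + X * D := sub_eq_iff_eq_add.mp hcomm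
  -- eigenvalue shift: E (X^k m) = (ℓ + k) • (X^k m)
  have eig : ∀ (ℓ : ℂ) (m : M), (X * D) m = ℓ • m → ∀ k : ℕ,
      (X * D) ((X ^ k) m) = (ℓ + k) • ((X ^ k) m) := by
    intro ℓ m hm k
    induction k with
    | zero => simpa using hm
    | succ k ih =>
      have hpow : (X ^ (k + 1)) m = X ((X ^ k) m) := by
        rw [pow_succ']; rfl
      rw [hpow]
      have h1 : (X * D) (X ((X ^ k) m)) = X ((D * X) ((X ^ k) m)) := rfl
      rw [h1, hDX]
      have : (1 + X * D) ((X ^ k) m) = (X ^ k) m + (ℓ + k) • ((X ^ k) m) := by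
        simp [LinearMap.add_apply, ih]
      rw [this]
      push_cast
      rw [map_add, map_smul]
      rw [add_smul, add_smul, add_smul, one_smul]
      abel
  have key : ∀ (ℓ : ℂ) (m : M) (N : ℕ), m ≠ 0 → (X * D) m = ℓ • m →
      (X ^ N) m = 0 → (∀ k < N, (X ^ k) m ≠ 0) → (N : ℂ) = -ℓ := by
    intro ℓ m N hm hE hN hlt
    match N with
    | 0 => exact absurd (by simpa using hN) hm
    | n + 1 =>
      have hm' : (X ^ n) m ≠ 0 := hlt n (Nat.lt_succ_self n)
      have hXm' : X ((X ^ n) m) = 0 := by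
        have hpow : (X ^ (n + 1)) m = X ((X ^ n) m) := by rw [pow_succ']; rfl
        rw [← hpow]; exact hN
      have h2 : (D * X) ((X ^ n) m) = 0 := by
        show D (X ((X ^ n) m)) = 0
        rw [hXm']; simp
      rw [hDX] at h2
      have h3 : (ℓ + n + 1) • ((X ^ n) m) = 0 := by
        have he := eig ℓ m hE n
        have : (X ^ n) m + (ℓ + n) • ((X ^ n) m) = 0 := by
          simpa [LinearMap.add_apply, he] using h2
        calc (ℓ + n + 1) • ((X ^ n) m)
            = (X ^ n) m + (ℓ + n) • ((X ^ n) m) := by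
              rw [add_smul, one_smul]; abel
          _ = 0 := this
      have h4 : ℓ + n + 1 = 0 := by
        by_contra h
        exact hm' ((smul_eq_zero.mp h3).resolve_left h)
      push_cast
      linear_combination h4
  refine ⟨?_, key⟩
  intro r m hr hEm
  by_contra hm
  have hex : ∃ n : ℕ, (X ^ n) m = 0 := hX m
  have hkey := key (r : ℂ) m (Nat.find hex) hm hEm (Nat.find_spec hex)
    (fun k hk => Nat.find_min hex hk)
  have hpos : 1 ≤ Nat.find hex := by
    refine Nat.pos_of_ne_zero (fun h0 => hm ?_)
    have := Nat.find_spec hex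
    rw [h0] at this
    simpa using this
  have hreal : (Nat.find hex : ℝ) = -r := by
    exact_mod_cast hkey
  have : (1 : ℝ) ≤ -r := by
    rw [← hreal]; exact_mod_cast hpos
  linarith
end

section
/- Let β be a one-parameter subgroup of a torus T acting on W = ℂ^d with weights α₁,…,α_d, let c : Lie(T) → ℂ be a character, and let M_c^β = D(W)/D(W)(eu(β) + c·β) where eu(β) is the half-density-shifted Euler operator. Suppose φ : M_c^β → M is a weakly β(Gₘ)-equivariant D(W)-module homomorphism such that φ(1) is annihilated by a large power of each negative-weight coordinate xᵢ and each ∂_{yᵢ} for positive-weight coordinates yᵢ. If c·β ∉ I(β) + (1/2)∑_{i=1}^d |αᵢ·β|, where I(β) is the set of nonnegative integer combinations of the |αᵢ·β|, then φ = 0. -/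
lemma aux_sum_update_nat {κ : Type*} [Fintype κ] [DecidableEq κ] (N : κ → ℕ) (l : κ)
    (h : N l ≠ 0) : (∑ i, Function.update N l (N l - 1) i) + 1 = ∑ i, N i := by
  rw [Finset.sum_update_of_mem (Finset.mem_univ l),
    ← Finset.add_sum_erase _ N (Finset.mem_univ l), Finset.erase_eq]
  omega

lemma aux_sum_update_cast {κ : Type*} [Fintype κ] [DecidableEq κ] (a : κ → ℕ) (u : κ → ℤ)
    (l : κ) :
    (∑ i, ((Function.update a l (a l + 1)) i : ℂ) * (u i : ℂ))
      = (∑ i, (a i : ℂ) * (u i : ℂ)) + (u l : ℂ) := by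
  rw [← Finset.add_sum_erase _ (fun i => ((Function.update a l (a l + 1)) i : ℂ) * (u i : ℂ))
      (Finset.mem_univ l),
    ← Finset.add_sum_erase _ (fun i => ((a i : ℂ)) * (u i : ℂ)) (Finset.mem_univ l)]
  rw [show (∑ i ∈ Finset.univ.erase l, ((Function.update a l (a l + 1)) i : ℂ) * (u i : ℂ))
      = ∑ i ∈ Finset.univ.erase l, (a i : ℂ) * (u i : ℂ) from
    Finset.sum_congr rfl fun i hi => by
      rw [Function.update_of_ne (Finset.ne_of_mem_erase hi)]]
  rw [Function.update_self]
  push_cast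
  ring

/-- Proposition (application of Kashiwara's equivalence): a weakly `β(Gₘ)`-equivariant
homomorphism `φ : M_c^β → M` whose value `m = φ(1)` is supported on `W₊ × W₋*`
vanishes, provided `c·β ∉ I(β) + (1/2)∑|αᵢ·β|`.  Here the Weyl algebra acts on `M`
through operators `xᵢ, ∂_{xᵢ}` (negative weight coordinates, weights `uᵢ > 0`) and
`yᵢ, ∂_{yᵢ}` (positive weight coordinates, weights `wᵢ > 0`), `M` carries a weak
`Gₘ`-action `σ` compatible with the weights, `m` is `Gₘ`-invariant and is killed by
the shifted Euler operator `eu(β) + c`; the conclusion `φ = 0` is `m = 0`. -/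
theorem stmt_13 {M : Type*} [AddCommGroup M] [Module ℂ M]
    (k j : ℕ)
    (Xo DX : Fin k → Module.End ℂ M) (Yo DY : Fin j → Module.End ℂ M)
    (u : Fin k → ℤ) (w : Fin j → ℤ)
    (hu : ∀ i, 0 < u i) (hw : ∀ i, 0 < w i)
    (hXD : ∀ i, DX i * Xo i - Xo i * DX i = 1)
    (hYD : ∀ i, DY i * Yo i - Yo i * DY i = 1)
    (hXX : ∀ i i', Commute (Xo i) (Xo i'))
    (hDXDX : ∀ i i', Commute (DX i) (DX i'))
    (hDXX : ∀ i i', i ≠ i' → Commute (DX i) (Xo i'))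
    (hYY : ∀ i i', Commute (Yo i) (Yo i'))
    (hDYDY : ∀ i i', Commute (DY i) (DY i'))
    (hDYY : ∀ i i', i ≠ i' → Commute (DY i) (Yo i'))
    (hXY : ∀ i i', Commute (Xo i) (Yo i'))
    (hXDY : ∀ i i', Commute (Xo i) (DY i'))
    (hDXY : ∀ i i', Commute (DX i) (Yo i'))
    (hDXDY : ∀ i i', Commute (DX i) (DY i'))
    (σ : ℂˣ →* (M ≃ₗ[ℂ] M))
    (hσX : ∀ (z : ℂˣ) (i), (σ z).toLinearMap ∘ₗ Xo i ∘ₗ (σ z⁻¹).toLinearMap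
        = ((z ^ u i : ℂˣ) : ℂ) • Xo i)
    (hσDX : ∀ (z : ℂˣ) (i), (σ z).toLinearMap ∘ₗ DX i ∘ₗ (σ z⁻¹).toLinearMap
        = ((z ^ (-u i) : ℂˣ) : ℂ) • DX i)
    (hσY : ∀ (z : ℂˣ) (i), (σ z).toLinearMap ∘ₗ Yo i ∘ₗ (σ z⁻¹).toLinearMap
        = ((z ^ (-w i) : ℂˣ) : ℂ) • Yo i)
    (hσDY : ∀ (z : ℂˣ) (i), (σ z).toLinearMap ∘ₗ DY i ∘ₗ (σ z⁻¹).toLinearMap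
        = ((z ^ w i : ℂˣ) : ℂ) • DY i)
    (m : M)
    (hminv : ∀ z : ℂˣ, σ z m = m)
    (hsupX : ∀ i, ∃ N : ℕ, (Xo i ^ N) m = 0)
    (hsupDY : ∀ i, ∃ N : ℕ, (DY i ^ N) m = 0)
    (c : ℂ)
    (heu : ((-∑ i, (w i : ℂ) • (Yo i * DY i + (1/2 : ℂ) • (1 : Module.End ℂ M))
          + ∑ i, (u i : ℂ) • (Xo i * DX i + (1/2 : ℂ) • (1 : Module.End ℂ M)))
        + c • (1 : Module.End ℂ M)) m = 0)
    (hc : ¬ ∃ (a : Fin k → ℕ) (b : Fin j → ℕ),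
        c = (∑ i, (a i : ℂ) * (u i : ℂ)) + (∑ i, (b i : ℂ) * (w i : ℂ))
          + (1/2) * ((∑ i, (u i : ℂ)) + ∑ i, (w i : ℂ))) :
    m = 0 := by
  classical
  set S1 : Module.End ℂ M :=
    ∑ i, (w i : ℂ) • (Yo i * DY i + (1/2 : ℂ) • (1 : Module.End ℂ M)) with hS1
  set S2 : Module.End ℂ M :=
    ∑ i, (u i : ℂ) • (Xo i * DX i + (1/2 : ℂ) • (1 : Module.End ℂ M)) with hS2
  set E : Module.End ℂ M := -S1 + S2 + c • (1 : Module.End ℂ M) with hEdef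
  -- `heu : E m = 0`
  have pow_transport : ∀ (A B : Module.End ℂ M) (s : ℕ) (x : M), Commute A B →
      (A ^ s) (B x) = B ((A ^ s) x) := by
    intro A B s x h
    rw [← Module.End.mul_apply, (h.pow_left s).eq, Module.End.mul_apply]
  have keyX : ∀ l, E * Xo l = Xo l * E + (u l : ℂ) • Xo l := by
    intro l
    have h1 : Commute S1 (Xo l) := by
      rw [hS1]
      exact Commute.sum_left _ _ _ fun i _ =>
        (((hXY l i).symm.mul_left (hXDY l i).symm).add_left
          ((Commute.one_left (Xo l)).smul_left (1/2 : ℂ))).smul_left _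
    have hd : DX l * Xo l = Xo l * DX l + 1 := by rw [← hXD l]; abel
    have hsub : S2 * Xo l - Xo l * S2 = (u l : ℂ) • Xo l := by
      rw [hS2, Finset.sum_mul, Finset.mul_sum, ← Finset.sum_sub_distrib,
        Finset.sum_eq_single_of_mem l (Finset.mem_univ l) (fun i _ hil => by
          have hcom : Commute
              ((u i : ℂ) • (Xo i * DX i + (1/2 : ℂ) • (1 : Module.End ℂ M))) (Xo l) :=
            (((hXX i l).mul_left (hDXX i l hil)).add_left
              ((Commute.one_left (Xo l)).smul_left (1/2 : ℂ))).smul_left _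
          rw [hcom.eq, sub_self])]
      rw [smul_mul_assoc, mul_smul_comm, ← smul_sub]
      congr 1
      rw [add_mul, mul_add, smul_mul_assoc, one_mul, mul_smul_comm, mul_one,
        mul_assoc, hd, mul_add, mul_one]
      abel
    have h2 : S2 * Xo l = Xo l * S2 + (u l : ℂ) • Xo l := by
      rw [sub_eq_iff_eq_add] at hsub
      rw [hsub, add_comm]
    have h3 : (c • (1 : Module.End ℂ M)) * Xo l = Xo l * (c • (1 : Module.End ℂ M)) :=
      ((Commute.one_left (Xo l)).smul_left c).eq
    calc E * Xo l = (-S1 + S2 + c • 1) * Xo l := by rw [hEdef]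
      _ = -(S1 * Xo l) + S2 * Xo l + (c • 1) * Xo l := by rw [add_mul, add_mul, neg_mul]
      _ = -(Xo l * S1) + (Xo l * S2 + (u l : ℂ) • Xo l) + Xo l * (c • 1) := by
          rw [h1.eq, h2, h3]
      _ = Xo l * E + (u l : ℂ) • Xo l := by
          rw [hEdef, mul_add, mul_add, mul_neg]; abel
  have keyY : ∀ l, E * DY l = DY l * E + (w l : ℂ) • DY l := by
    intro l
    have h1 : Commute S2 (DY l) := by
      rw [hS2]
      exact Commute.sum_left _ _ _ fun i _ =>
        (((hXDY i l).mul_left (hDXDY i l)).add_left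
          ((Commute.one_left (DY l)).smul_left (1/2 : ℂ))).smul_left _
    have hd : DY l * Yo l = Yo l * DY l + 1 := by rw [← hYD l]; abel
    have hsub : S1 * DY l - DY l * S1 = (-(w l : ℂ)) • DY l := by
      rw [hS1, Finset.sum_mul, Finset.mul_sum, ← Finset.sum_sub_distrib,
        Finset.sum_eq_single_of_mem l (Finset.mem_univ l) (fun i _ hil => by
          have hcom : Commute
              ((w i : ℂ) • (Yo i * DY i + (1/2 : ℂ) • (1 : Module.End ℂ M))) (DY l) :=
            ((((hDYY l i (Ne.symm hil)).symm).mul_left (hDYDY i l)).add_left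
              ((Commute.one_left (DY l)).smul_left (1/2 : ℂ))).smul_left _
          rw [hcom.eq, sub_self])]
      rw [smul_mul_assoc, mul_smul_comm, ← smul_sub]
      rw [show (Yo l * DY l + (1/2 : ℂ) • (1 : Module.End ℂ M)) * DY l
          - DY l * (Yo l * DY l + (1/2 : ℂ) • (1 : Module.End ℂ M)) = -(DY l) from by
        rw [add_mul, mul_add, smul_mul_assoc, one_mul, mul_smul_comm, mul_one,
          ← mul_assoc, hd, add_mul, one_mul]
        abel]
      rw [smul_neg, ← neg_smul]
    have h2 : S1 * DY l = DY l * S1 + (-(w l : ℂ)) • DY l := by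
      rw [sub_eq_iff_eq_add] at hsub
      rw [hsub, add_comm]
    have h3 : (c • (1 : Module.End ℂ M)) * DY l = DY l * (c • (1 : Module.End ℂ M)) :=
      ((Commute.one_left (DY l)).smul_left c).eq
    calc E * DY l = (-S1 + S2 + c • 1) * DY l := by rw [hEdef]
      _ = -(S1 * DY l) + S2 * DY l + (c • 1) * DY l := by rw [add_mul, add_mul, neg_mul]
      _ = -(DY l * S1 + (-(w l : ℂ)) • DY l) + DY l * S2 + DY l * (c • 1) := by
          rw [h1.eq, h2, h3]
      _ = DY l * E + (w l : ℂ) • DY l := by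
          rw [hEdef, mul_add, mul_add, mul_neg, neg_add, neg_smul, neg_neg]; abel
  -- main induction
  have main : ∀ d : ℕ, ∀ (N : Fin k → ℕ) (Nm : Fin j → ℕ) (n : M)
      (a : Fin k → ℕ) (b : Fin j → ℕ), (∑ i, N i) + (∑ i, Nm i) = d →
      (∀ i, (Xo i ^ N i) n = 0) → (∀ i, (DY i ^ Nm i) n = 0) →
      E n = ((∑ i, (a i : ℂ) * (u i : ℂ)) + ∑ i, (b i : ℂ) * (w i : ℂ)) • n →
      n = 0 := by
    intro d
    induction d using Nat.strong_induction_on with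
    | _ d IH =>
      intro N Nm n a b hd hNX hNY heig
      by_cases h0 : (∃ i, N i = 0) ∨ (∃ i, Nm i = 0)
      · rcases h0 with ⟨i, hi⟩ | ⟨i, hi⟩
        · have := hNX i; rw [hi, pow_zero] at this; simpa using this
        · have := hNY i; rw [hi, pow_zero] at this; simpa using this
      push_neg at h0
      obtain ⟨hN1, hNm1⟩ := h0
      have hXn : ∀ l, Xo l n = 0 := by
        intro l
        refine IH ((∑ i, Function.update N l (N l - 1) i) + ∑ i, Nm i) ?_
          (Function.update N l (N l - 1)) Nm (Xo l n)
          (Function.update a l (a l + 1)) b rfl ?_ ?_ ?_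
        · have := aux_sum_update_nat N l (hN1 l); omega
        · intro i
          by_cases hil : i = l
          · subst hil
            rw [Function.update_self, ← Module.End.mul_apply, ← pow_succ,
              Nat.sub_add_cancel (Nat.one_le_iff_ne_zero.mpr (hN1 i)), hNX i]
          · rw [Function.update_of_ne hil, pow_transport _ _ _ _ (hXX i l), hNX i, map_zero]
        · intro i
          rw [pow_transport _ _ _ _ ((hXDY l i).symm), hNY i, map_zero]
        · rw [← Module.End.mul_apply, keyX l, LinearMap.add_apply, Module.End.mul_apply,
            heig, map_smul, LinearMap.smul_apply, aux_sum_update_cast a u l, ← add_smul]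
          congr 1
          ring
      have hYn : ∀ l, DY l n = 0 := by
        intro l
        refine IH ((∑ i, N i) + ∑ i, Function.update Nm l (Nm l - 1) i) ?_
          N (Function.update Nm l (Nm l - 1)) (DY l n)
          a (Function.update b l (b l + 1)) rfl ?_ ?_ ?_
        · have := aux_sum_update_nat Nm l (hNm1 l); omega
        · intro i
          rw [pow_transport _ _ _ _ (hXDY i l), hNX i, map_zero]
        · intro i
          by_cases hil : i = l
          · subst hil
            rw [Function.update_self, ← Module.End.mul_apply, ← pow_succ,
              Nat.sub_add_cancel (Nat.one_le_iff_ne_zero.mpr (hNm1 i)), hNY i]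
          · rw [Function.update_of_ne hil, pow_transport _ _ _ _ (hDYDY i l), hNY i, map_zero]
        · rw [← Module.End.mul_apply, keyY l, LinearMap.add_apply, Module.End.mul_apply,
            heig, map_smul, LinearMap.smul_apply, aux_sum_update_cast b w l, ← add_smul]
          congr 1
          ring
      -- base case: n is killed by all Xo and DY
      have hXDXn : ∀ i, (Xo i * DX i) n = -n := by
        intro i
        have h1 : Xo i * DX i = DX i * Xo i - 1 := by rw [← hXD i]; abel
        rw [h1, LinearMap.sub_apply, Module.End.mul_apply, hXn i, map_zero,
          Module.End.one_apply, zero_sub]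
      have hYDYn : ∀ i, (Yo i * DY i) n = 0 := by
        intro i
        rw [Module.End.mul_apply, hYn i, map_zero]
      have hS1n : S1 n = ((1/2 : ℂ) * ∑ i, (w i : ℂ)) • n := by
        rw [hS1, LinearMap.sum_apply,
          Finset.sum_congr rfl (fun i _ => show
            ((w i : ℂ) • (Yo i * DY i + (1/2 : ℂ) • (1 : Module.End ℂ M))) n
              = ((w i : ℂ) * (1/2 : ℂ)) • n from by
            rw [LinearMap.smul_apply, LinearMap.add_apply, hYDYn i, LinearMap.smul_apply,
              Module.End.one_apply, zero_add, smul_smul]),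
          ← Finset.sum_smul]
        congr 1
        rw [Finset.mul_sum]
        exact Finset.sum_congr rfl fun i _ => mul_comm _ _
      have hS2n : S2 n = ((-(1/2) : ℂ) * ∑ i, (u i : ℂ)) • n := by
        rw [hS2, LinearMap.sum_apply,
          Finset.sum_congr rfl (fun i _ => show
            ((u i : ℂ) • (Xo i * DX i + (1/2 : ℂ) • (1 : Module.End ℂ M))) n
              = ((u i : ℂ) * (-(1/2) : ℂ)) • n from by
            rw [LinearMap.smul_apply, LinearMap.add_apply, hXDXn i, LinearMap.smul_apply,
              Module.End.one_apply]
            rw [show -n + (1/2 : ℂ) • n = (-(1/2) : ℂ) • n from by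
              rw [show -n = (-1 : ℂ) • n from by rw [neg_smul, one_smul], ← add_smul]
              norm_num]
            rw [smul_smul]),
          ← Finset.sum_smul]
        congr 1
        rw [Finset.mul_sum]
        exact Finset.sum_congr rfl fun i _ => mul_comm _ _
      have hbase : E n = (c - (1/2) * ((∑ i, (u i : ℂ)) + ∑ i, (w i : ℂ))) • n := by
        rw [hEdef, LinearMap.add_apply, LinearMap.add_apply, LinearMap.neg_apply,
          hS1n, hS2n, LinearMap.smul_apply, Module.End.one_apply, ← neg_smul, ← add_smul,
          ← add_smul]
        congr 1
        ring
      have hzero : ((c - (1/2) * ((∑ i, (u i : ℂ)) + ∑ i, (w i : ℂ)))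
          - ((∑ i, (a i : ℂ) * (u i : ℂ)) + ∑ i, (b i : ℂ) * (w i : ℂ))) • n = 0 := by
        rw [sub_smul, hbase.symm.trans heig, sub_self]
      rcases smul_eq_zero.mp hzero with h | h
      · exact absurd ⟨a, b, by linear_combination h⟩ hc
      · exact h
  choose N hN using hsupX
  choose Nm hNm using hsupDY
  refine main ((∑ i, N i) + ∑ i, Nm i) N Nm m (fun _ => 0) (fun _ => 0) rfl hN hNm ?_
  simp only [Nat.cast_zero, zero_mul, Finset.sum_const_zero, add_zero, zero_smul]
  exact heu
end

section
/- Let Gₘ act on W = ℂ^{n+1} with all weights equal to 1 and on T*W accordingly, let β(z) = z⁻¹·Id and χ(z) = z, so dχ·β = −1. For ε a small negative rational, twisting the linearization on ℙ(ℂ ⊕ T*W) by χ^{−ε} gives weights (ε, 1+ε,…,1+ε, −1+ε,…,−1+ε); the only nonzero minimal convex combination of such weights relevant to points of T*W is β = ε itself, and the corresponding attracting set is Y_β = {0} × W* ⊆ W × W* = T*W. -/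
/-- Example: `Gₘ` acting on `W = ℂ^{n+1}` with all weights `1`, `β(z) = z⁻¹·Id`,
`χ(z) = z`, `ε` small and negative.  The shifted weights on `ℂ × T*W` are
`ε`, `1+ε` (n+1 times) and `-1+ε` (n+1 times); the only nonzero minimal convex
combination of such weights (for subsets containing `ε`) is `ε` itself, and the
attracting set is `Y_β = {0} × W* ⊆ W × W* = T*W`. -/
theorem stmt_15 (n : ℕ) (ε : ℚ) (h1 : -1/2 < ε) (h2 : ε < 0) :
    (∀ S : Finset ℚ, (S : Set ℚ) ⊆ {ε, 1 + ε, -1 + ε} → ε ∈ S →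
      ∀ b ∈ convexHull ℚ (S : Set ℚ),
        (∀ x ∈ convexHull ℚ (S : Set ℚ), |b| ≤ |x|) → b = 0 ∨ b = ε) ∧
    ({v : (Fin (n+1) → ℂ) × (Fin (n+1) → ℂ) |
        (∀ i, v.1 i ≠ 0 → (0 : ℚ) ≤ 1 * ε) ∧ (∀ i, v.2 i ≠ 0 → (0 : ℚ) ≤ (-1) * ε)}
      = {v : (Fin (n+1) → ℂ) × (Fin (n+1) → ℂ) | v.1 = 0}) := by
  constructor
  · intro S hS hεS b hb hmin
    by_cases hmem : (1 + ε) ∈ S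
    · -- 0 is in the hull
      left
      have h0 : (0 : ℚ) ∈ convexHull ℚ (S : Set ℚ) := by
        have hseg : (0 : ℚ) ∈ segment ℚ ε (1 + ε) := by
          rw [segment_eq_Icc (by linarith : ε ≤ 1 + ε)]
          constructor <;> [linarith; linarith]
        have := (convex_convexHull ℚ (S : Set ℚ)).segment_subset
          (subset_convexHull ℚ _ hεS) (subset_convexHull ℚ _ hmem)
        exact this hseg
      have := hmin 0 h0
      simpa [abs_nonpos_iff] using this
    · right
      have hsub : (S : Set ℚ) ⊆ Set.Iic ε := by
        intro x hx
        rcases hS hx with h | h | h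
        · exact le_of_eq h
        · exact absurd (by simpa [h] using hx) hmem
        · rw [Set.mem_singleton_iff] at h; simp only [Set.mem_Iic, h]; linarith
      have hhull : convexHull ℚ (S : Set ℚ) ⊆ Set.Iic ε :=
        convexHull_min hsub (convex_Iic ε)
      have hble : b ≤ ε := hhull hb
      have habs := hmin ε (subset_convexHull ℚ _ hεS)
      rw [abs_of_nonpos (by linarith : b ≤ 0), abs_of_nonpos (le_of_lt h2)] at habs
      linarith
  · ext v
    simp only [Set.mem_setOf_eq]
    constructor
    · rintro ⟨ha, _⟩
      funext i
      by_contra hne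
      have := ha i hne
      nlinarith
    · intro hv
      refine ⟨fun i hi => absurd (by rw [hv]; rfl) hi, fun i _ => by nlinarith⟩
end

section
/- Let V be a representation of G, β a KN one-parameter subgroup with decomposition V = V₊(β) ⊕ V₀(β) ⊕ V₋(β), Z_β = V₀(β), Y_β = V₊(β) × V₀(β), Z_β^{ss} ⊆ Z_β open. If V = T*W for a G-representation W, then Y_β = W₊(β) × W₋(β)* × T*W₀(β), which is coisotropic in T*W, and Y_β^{ss} = W₊(β) × W₋(β)* × Z_β^{ss}. -/
noncomputable section

/-- The canonical symplectic form on `T*W = W × W*` for `W = W₊ × W₀ × W₋`. -/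
noncomputable def cotForm (Wp W0 Wm : Type*) [AddCommGroup Wp] [Module ℂ Wp]
    [AddCommGroup W0] [Module ℂ W0] [AddCommGroup Wm] [Module ℂ Wm] :
    LinearMap.BilinForm ℂ ((Wp × W0 × Wm) × Module.Dual ℂ (Wp × W0 × Wm)) :=
  LinearMap.mk₂ ℂ (fun p q => q.2 p.1 - p.2 q.1)
    (fun m₁ m₂ n => by
      simp only [Prod.fst_add, Prod.snd_add, map_add, LinearMap.add_apply]; ring)
    (fun c m n => by
      simp only [Prod.smul_fst, Prod.smul_snd, map_smul, LinearMap.smul_apply,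
        smul_eq_mul]; ring)
    (fun m n₁ n₂ => by
      simp only [Prod.fst_add, Prod.snd_add, map_add, LinearMap.add_apply]; ring)
    (fun c m n => by
      simp only [Prod.smul_fst, Prod.smul_snd, map_smul, LinearMap.smul_apply,
        smul_eq_mul]; ring)

/-- `Y_β ⊆ T*W`: vectors `(w, ξ)` with no `W₋`-component and `ξ` annihilating `W₊`. -/
noncomputable def coisoY (Wp W0 Wm : Type*) [AddCommGroup Wp] [Module ℂ Wp]
    [AddCommGroup W0] [Module ℂ W0] [AddCommGroup Wm] [Module ℂ Wm] :
    Submodule ℂ ((Wp × W0 × Wm) × Module.Dual ℂ (Wp × W0 × Wm)) where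
  carrier := {p | p.1.2.2 = 0 ∧ ∀ a : Wp, p.2 (a, 0, 0) = 0}
  zero_mem' := ⟨rfl, fun _ => rfl⟩
  add_mem' := by
    rintro p q ⟨hp1, hp2⟩ ⟨hq1, hq2⟩
    refine ⟨?_, ?_⟩
    · show p.1.2.2 + q.1.2.2 = 0
      rw [hp1, hq1, add_zero]
    · intro a
      show p.2 (a, 0, 0) + q.2 (a, 0, 0) = 0
      rw [hp2 a, hq2 a, add_zero]
  smul_mem' := by
    rintro c p ⟨hp1, hp2⟩
    refine ⟨?_, ?_⟩
    · show c • p.1.2.2 = 0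
      rw [hp1, smul_zero]
    · intro a
      show (c • p.2) (a, 0, 0) = 0
      rw [LinearMap.smul_apply, hp2 a, smul_zero]

variable (Wp W0 Wm : Type*) [AddCommGroup Wp] [Module ℂ Wp] [AddCommGroup W0] [Module ℂ W0]
  [AddCommGroup Wm] [Module ℂ Wm]

/-- Projection `W → W₀`. -/
noncomputable def proj0 : (Wp × W0 × Wm) →ₗ[ℂ] W0 :=
  (LinearMap.fst ℂ W0 Wm).comp (LinearMap.snd ℂ Wp (W0 × Wm))

/-- Projection `W → W₋`. -/
noncomputable def projm : (Wp × W0 × Wm) →ₗ[ℂ] Wm :=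
  (LinearMap.snd ℂ W0 Wm).comp (LinearMap.snd ℂ Wp (W0 × Wm))

/-- Inclusion `W₀ → W`. -/
noncomputable def incl0 : W0 →ₗ[ℂ] (Wp × W0 × Wm) :=
  (LinearMap.inr ℂ Wp (W0 × Wm)).comp (LinearMap.inl ℂ W0 Wm)

/-- The identification `W₊ × W₋* × T*W₀ → T*W` onto `Y_β`:
`(a, η, (b, ζ)) ↦ ((a, b, 0), ζ∘pr₀ + η∘pr₋)`. -/
noncomputable def embY (q : Wp × Module.Dual ℂ Wm × (W0 × Module.Dual ℂ W0)) :
    (Wp × W0 × Wm) × Module.Dual ℂ (Wp × W0 × Wm) :=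
  ((q.1, q.2.2.1, 0), q.2.2.2 ∘ₗ proj0 Wp W0 Wm + q.2.1 ∘ₗ projm Wp W0 Wm)


noncomputable def inclm' : Wm →ₗ[ℂ] (Wp × W0 × Wm) :=
  (LinearMap.inr ℂ Wp (W0 × Wm)).comp (LinearMap.inr ℂ W0 Wm)

lemma embY_eq_self (p : (Wp × W0 × Wm) × Module.Dual ℂ (Wp × W0 × Wm))
    (h1 : p.1.2.2 = 0) (h2 : ∀ a : Wp, p.2 (a, 0, 0) = 0) :
    embY Wp W0 Wm (p.1.1, p.2 ∘ₗ inclm' Wp W0 Wm, (p.1.2.1, p.2 ∘ₗ incl0 Wp W0 Wm)) = p := by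
  obtain ⟨⟨a, b, c⟩, ξ⟩ := p
  simp only at h1 h2
  subst h1
  simp only [embY, Prod.mk.injEq]
  refine ⟨trivial, ?_⟩
  apply LinearMap.ext
  rintro ⟨x, y, z⟩
  have : (x, y, z) = (x, (0:W0), (0:Wm)) + ((0:Wp), y, (0:Wm)) + ((0:Wp), (0:W0), z) := by
    simp
  simp only [LinearMap.add_apply, LinearMap.comp_apply, proj0, projm, incl0, inclm',
    LinearMap.coe_comp, Function.comp_apply, LinearMap.fst_apply, LinearMap.snd_apply,
    LinearMap.inl_apply, LinearMap.inr_apply]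
  conv_rhs => rw [this]
  rw [map_add, map_add, h2 x, zero_add]

/-- For `V = T*W`: `Y_β = W₊ × W₋* × T*W₀` (the image of `embY`), `Y_β` is coisotropic
in `T*W`, and `Y_β^{ss} = W₊ × W₋* × Z_β^{ss}` (for any subset `Z_β^{ss}` of
`Z_β = T*W₀`). -/
theorem stmt_16 [FiniteDimensional ℂ Wp] [FiniteDimensional ℂ W0] [FiniteDimensional ℂ Wm] :
    (Set.range (embY Wp W0 Wm)
        = ((coisoY Wp W0 Wm : Submodule ℂ _) :
            Set ((Wp × W0 × Wm) × Module.Dual ℂ (Wp × W0 × Wm)))) ∧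
    (LinearMap.BilinForm.orthogonal (cotForm Wp W0 Wm) (coisoY Wp W0 Wm)
        ≤ coisoY Wp W0 Wm) ∧
    (∀ Zss : Set (W0 × Module.Dual ℂ W0),
      embY Wp W0 Wm '' {q | q.2.2 ∈ Zss}
        = {p | p ∈ coisoY Wp W0 Wm ∧ (p.1.2.1, p.2 ∘ₗ incl0 Wp W0 Wm) ∈ Zss}) := by
  have memY : ∀ q, embY Wp W0 Wm q ∈ coisoY Wp W0 Wm := by
    rintro ⟨a, η, b, ζ⟩
    constructor
    · rfl
    · intro x
      simp [embY, proj0, projm]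
  refine ⟨?_, ?_, ?_⟩
  · ext p
    constructor
    · rintro ⟨q, rfl⟩
      exact memY q
    · rintro ⟨h1, h2⟩
      exact ⟨_, embY_eq_self Wp W0 Wm p h1 h2⟩
  · intro p hp
    have key : ∀ n ∈ coisoY Wp W0 Wm, cotForm Wp W0 Wm n p = 0 := hp
    constructor
    · rw [← Module.forall_dual_apply_eq_zero_iff ℂ]
      intro η
      have h := key (0, η ∘ₗ projm Wp W0 Wm) ⟨rfl, fun a => by simp [projm]⟩
      simpa [cotForm, projm] using h
    · intro a
      have h := key ((a, 0, 0), 0) ⟨rfl, fun _ => rfl⟩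
      simpa [cotForm] using h
  · intro Zss
    ext p
    constructor
    · rintro ⟨⟨a, η, b, ζ⟩, hq, rfl⟩
      refine ⟨memY _, ?_⟩
      have : (((embY Wp W0 Wm (a, η, b, ζ)).1.2.1 : W0),
          (embY Wp W0 Wm (a, η, b, ζ)).2 ∘ₗ incl0 Wp W0 Wm) = (b, ζ) := by
        simp only [embY, Prod.mk.injEq]
        refine ⟨trivial, ?_⟩
        ext y
        simp [proj0, projm, incl0]
      rw [this]
      exact hq
    · rintro ⟨⟨h1, h2⟩, hz⟩
      exact ⟨(p.1.1, p.2 ∘ₗ inclm' Wp W0 Wm, (p.1.2.1, p.2 ∘ₗ incl0 Wp W0 Wm)), hz,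
        embY_eq_self Wp W0 Wm p h1 h2⟩

end
end

section
/- For the type A quiver-like representation W = 𝔤𝔩_n × ℂ^n of G = GL_n with the determinant character, the KN one-parameter subgroups (up to Weyl group action and positive scaling) are β_k corresponding to ∑_{i=1}^k eᵢ for 1 ≤ k ≤ n, and for each such β_k: (1/2)∑ᵢ|αᵢ·β_k| = (n−k)k + k/2, wt_{𝔫⁻}(β_k) = −(n−k)k, and hence the shift (1/2)∑ᵢ|αᵢ·β_k| + wt_{𝔫⁻}(β_k) equals k/2. -/
noncomputable section

/-- The one-parameter subgroup `β_k = ∑_{i=1}^k eᵢ` of the diagonal torus of `GL_n`. -/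
def betaK (n k : ℕ) : Fin n → ℝ := fun i => if (i : ℕ) < k then 1 else 0

/-- The span of a subset of the `T`-weights of `W = 𝔤𝔩_n × ℂ^n`
(roots `eᵢ - eⱼ` from `A` and weights `eᵢ` from `B`). -/
def wtSpan (n : ℕ) (A : Finset (Fin n × Fin n)) (B : Finset (Fin n)) :
    Submodule ℝ (EuclideanSpace ℝ (Fin n)) :=
  Submodule.span ℝ
    ((fun p : Fin n × Fin n =>
        EuclideanSpace.single p.1 (1 : ℝ) - EuclideanSpace.single p.2 (1 : ℝ)) ''
          (A : Set (Fin n × Fin n))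
      ∪ (fun i : Fin n => EuclideanSpace.single i (1 : ℝ)) '' (B : Set (Fin n)))

/-- The orthogonal projection of `λ = ∑ eᵢ` onto the orthocomplement of the span of a
subset of the weights. -/
def lamProj (n : ℕ) (A : Finset (Fin n × Fin n)) (B : Finset (Fin n)) :
    EuclideanSpace ℝ (Fin n) :=
  (Submodule.orthogonalProjection (wtSpan n A B)ᗮ
    ((WithLp.equiv 2 (Fin n → ℝ)).symm fun _ => (1 : ℝ)) : EuclideanSpace ℝ (Fin n))

/-
The projection of `λ = ∑ eᵢ` onto `(wtSpan n A B)ᗮ` is the indicator of the coordinates `i` with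
`eᵢ ∉ wtSpan n A B`: this vector is orthogonal to every weight `eᵢ - eⱼ` (an edge `(i, j) ∈ A` puts
`eᵢ` and `eⱼ` in the span together) and every `e_b`, `b ∈ B`, while `λ` minus it is a sum of `eᵢ`
lying in the span. For the numerical part, `β_k` is `0/1`-valued, so `|βᵢ - βⱼ|` and
`min (βᵢ - βⱼ) 0` are bilinear in `β` and `1 - β`, and the sums over pairs factor as products of
`∑ β = k` and `∑ (1 - β) = n - k`.
-/

lemma Submodule.mem_orthogonal_span_of_inner_eq_zero {𝕜 E : Type*} [RCLike 𝕜]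
    [NormedAddCommGroup E] [InnerProductSpace 𝕜 E] {s : Set E} {v : E}
    (h : ∀ u ∈ s, inner 𝕜 u v = 0) : v ∈ (Submodule.span 𝕜 s)ᗮ := by
  rw [Submodule.mem_orthogonal]
  intro u hu
  induction hu using Submodule.span_induction with
  | mem u hu => exact h u hu
  | zero => exact inner_zero_left v
  | add x y _ _ hx hy => rw [inner_add_left, hx, hy, add_zero]
  | smul a x _ hx => rw [inner_smul_left, hx, mul_zero]

namespace wtSpan

variable {n : ℕ} {A : Finset (Fin n × Fin n)} {B : Finset (Fin n)}

lemma single_sub_single_mem {i j : Fin n} (h : (i, j) ∈ A) :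
    EuclideanSpace.single i (1 : ℝ) - EuclideanSpace.single j 1 ∈ wtSpan n A B :=
  Submodule.subset_span (Or.inl ⟨(i, j), h, rfl⟩)

lemma single_mem {b : Fin n} (h : b ∈ B) : EuclideanSpace.single b (1 : ℝ) ∈ wtSpan n A B :=
  Submodule.subset_span (Or.inr ⟨b, h, rfl⟩)

lemma single_mem_iff_of_mem {i j : Fin n} (h : (i, j) ∈ A) :
    EuclideanSpace.single i (1 : ℝ) ∈ wtSpan n A B ↔
      EuclideanSpace.single j (1 : ℝ) ∈ wtSpan n A B := by
  constructor
  · intro hi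
    simpa using sub_mem hi (single_sub_single_mem h)
  · intro hj
    simpa using add_mem (single_sub_single_mem h) hj

end wtSpan

open Classical in
theorem lamProj_eq (n : ℕ) (A : Finset (Fin n × Fin n)) (B : Finset (Fin n)) :
    lamProj n A B = WithLp.toLp 2
      (fun i => if EuclideanSpace.single i (1 : ℝ) ∈ wtSpan n A B then 0 else 1) := by
  set v : EuclideanSpace ℝ (Fin n) := WithLp.toLp 2
    (fun i => if EuclideanSpace.single i (1 : ℝ) ∈ wtSpan n A B then 0 else 1)
  have hv : v ∈ (wtSpan n A B)ᗮ := by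
    apply Submodule.mem_orthogonal_span_of_inner_eq_zero
    rintro u (⟨⟨i, j⟩, hij, rfl⟩ | ⟨b, hb, rfl⟩)
    · simp [v, inner_sub_left, EuclideanSpace.inner_single_left,
        wtSpan.single_mem_iff_of_mem hij]
    · simp [v, EuclideanSpace.inner_single_left, wtSpan.single_mem (Finset.mem_coe.mp hb)]
  have hrest : (WithLp.equiv 2 (Fin n → ℝ)).symm (fun _ => (1 : ℝ)) - v
      = ∑ i with EuclideanSpace.single i (1 : ℝ) ∈ wtSpan n A B, EuclideanSpace.single i 1 := by
    ext i
    by_cases hi : EuclideanSpace.single i (1 : ℝ) ∈ wtSpan n A B <;> simp [v, hi]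
  rw [lamProj, ← Submodule.starProjection_apply]
  refine Submodule.eq_starProjection_of_mem_orthogonal hv
    ((wtSpan n A B).le_orthogonal_orthogonal ?_)
  rw [hrest]
  exact Submodule.sum_mem _ fun i hi => (Finset.mem_filter.mp hi).2

theorem lamProj_apply_mem (n : ℕ) (A : Finset (Fin n × Fin n)) (B : Finset (Fin n))
    (i : Fin n) : lamProj n A B i ∈ ({0, 1} : Set ℝ) := by
  rw [lamProj_eq, PiLp.toLp_apply]
  split_ifs <;> simp

section ZeroOne

variable {ι R : Type*} [Fintype ι] [CommRing R] [LinearOrder R] [IsOrderedRing R]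

lemma abs_sub_eq_of_eq_zero_or_eq_one {a b : R} (ha : a = 0 ∨ a = 1) (hb : b = 0 ∨ b = 1) :
    |a - b| = a * (1 - b) + (1 - a) * b := by
  rcases ha with rfl | rfl <;> rcases hb with rfl | rfl <;> simp

lemma min_sub_zero_eq_of_eq_zero_or_eq_one {a b : R} (ha : a = 0 ∨ a = 1)
    (hb : b = 0 ∨ b = 1) : min (a - b) 0 = -((1 - a) * b) := by
  rcases ha with rfl | rfl <;> rcases hb with rfl | rfl <;> simp

variable {f : ι → R}

lemma sum_abs_sub_eq_of_eq_zero_or_eq_one (hf : ∀ i, f i = 0 ∨ f i = 1) :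
    ∑ p : ι × ι, |f p.1 - f p.2| = 2 * ((∑ i, (1 - f i)) * ∑ i, f i) := by
  simp_rw [abs_sub_eq_of_eq_zero_or_eq_one (hf _) (hf _), Fintype.sum_prod_type,
    Finset.sum_add_distrib, ← Fintype.sum_mul_sum]
  ring

lemma sum_min_sub_zero_eq_of_eq_zero_or_eq_one (hf : ∀ i, f i = 0 ∨ f i = 1) :
    ∑ p : ι × ι, min (f p.1 - f p.2) 0 = -((∑ i, (1 - f i)) * ∑ i, f i) := by
  simp_rw [min_sub_zero_eq_of_eq_zero_or_eq_one (hf _) (hf _), Fintype.sum_prod_type,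
    Finset.sum_neg_distrib, ← Fintype.sum_mul_sum]

end ZeroOne

section betaK

variable {n k : ℕ}

lemma betaK_eq_zero_or_eq_one (i : Fin n) : betaK n k i = 0 ∨ betaK n k i = 1 := by
  unfold betaK
  split_ifs <;> simp

lemma sum_betaK (hkn : k ≤ n) : ∑ i, betaK n k i = k := by
  simp [betaK, Finset.sum_boole, Fin.card_filter_val_lt, hkn]

lemma sum_abs_betaK (hkn : k ≤ n) : ∑ i, |betaK n k i| = k := by
  rw [← sum_betaK hkn]
  refine Finset.sum_congr rfl fun i _ => abs_of_nonneg ?_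
  rcases betaK_eq_zero_or_eq_one (k := k) i with h | h <;> simp [h]

lemma sum_one_sub_betaK (hkn : k ≤ n) : ∑ i, (1 - betaK n k i) = (n : ℝ) - k := by
  simp [Finset.sum_sub_distrib, sum_betaK hkn]

lemma sum_abs_betaK_sub (hkn : k ≤ n) :
    ∑ p : Fin n × Fin n, |betaK n k p.1 - betaK n k p.2| = 2 * (((n : ℝ) - k) * k) := by
  rw [sum_abs_sub_eq_of_eq_zero_or_eq_one betaK_eq_zero_or_eq_one, sum_one_sub_betaK hkn,
    sum_betaK hkn]

lemma sum_min_betaK_sub (hkn : k ≤ n) :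
    ∑ p : Fin n × Fin n, min (betaK n k p.1 - betaK n k p.2) 0 = -(((n : ℝ) - k) * k) := by
  rw [sum_min_sub_zero_eq_of_eq_zero_or_eq_one betaK_eq_zero_or_eq_one, sum_one_sub_betaK hkn,
    sum_betaK hkn]

end betaK

theorem stmt_18_general (n k : ℕ) (hkn : k ≤ n) :
    (∀ (A : Finset (Fin n × Fin n)) (B : Finset (Fin n)) (i : Fin n),
      lamProj n A B i ∈ ({0, 1} : Set ℝ)) ∧
    ((1/2 : ℝ) * ((∑ p : Fin n × Fin n, |betaK n k p.1 - betaK n k p.2|)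
          + ∑ i, |betaK n k i|)
        = ((n : ℝ) - k) * k + k / 2) ∧
    ((∑ p : Fin n × Fin n, min (betaK n k p.1 - betaK n k p.2) 0)
        = -(((n : ℝ) - k) * k)) ∧
    ((1/2 : ℝ) * ((∑ p : Fin n × Fin n, |betaK n k p.1 - betaK n k p.2|)
          + ∑ i, |betaK n k i|)
        + (∑ p : Fin n × Fin n, min (betaK n k p.1 - betaK n k p.2) 0)
        = k / 2) := by
  refine ⟨lamProj_apply_mem n, ?_, sum_min_betaK_sub hkn, ?_⟩
  · rw [sum_abs_betaK_sub hkn, sum_abs_betaK hkn]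
    ring
  · rw [sum_abs_betaK_sub hkn, sum_abs_betaK hkn, sum_min_betaK_sub hkn]
    ring

/-- For `W = 𝔤𝔩_n × ℂ^n` and `G = GL_n` with the determinant character `λ = ∑ eᵢ`:
the KN one-parameter subgroups are, up to Weyl group action and positive scaling, the
`β_k = ∑_{i=1}^k eᵢ` (every projection of `λ` onto the orthocomplement of a span of a
subset of the weights is a `0/1`-vector, i.e. a permutation of some `β_k`); and for
each `β_k` with `1 ≤ k ≤ n`: `(1/2)∑|αᵢ·β_k| = (n-k)k + k/2`,
`wt_{𝔫⁻}(β_k) = -(n-k)k`, and hence the total shift equals `k/2`. -/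
theorem stmt_18 (n k : ℕ) (hk1 : 1 ≤ k) (hkn : k ≤ n) :
    (∀ (A : Finset (Fin n × Fin n)) (B : Finset (Fin n)) (i : Fin n),
      lamProj n A B i ∈ ({0, 1} : Set ℝ)) ∧
    ((1/2 : ℝ) * ((∑ p : Fin n × Fin n, |betaK n k p.1 - betaK n k p.2|)
          + ∑ i, |betaK n k i|)
        = ((n : ℝ) - k) * k + k / 2) ∧
    ((∑ p : Fin n × Fin n, min (betaK n k p.1 - betaK n k p.2) 0)
        = -(((n : ℝ) - k) * k)) ∧
    ((1/2 : ℝ) * ((∑ p : Fin n × Fin n, |betaK n k p.1 - betaK n k p.2|)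
          + ∑ i, |betaK n k i|)
        + (∑ p : Fin n × Fin n, min (betaK n k p.1 - betaK n k p.2) 0)
        = k / 2) :=
  stmt_18_general n k hkn

end
end
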